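/- arXiv:0807.3364 — 8 statements merged into one kernel-verified Lean document; each statement's English description precedes it below -/
import Mathlib

section
/- If α and β are π-adjacent permutations for an ordered partition π = (X_1,...,X_m), then the distance d(α,β) equals the sum over i of |X_i| choose 2. -/
/-- The inversion distance between two permutations of `Fin n`: the number of
pairs `{x,y}` (with `x < y`) appearing in opposite relative orders in the linear
orders induced by `α` and `β`, where `x <_α y ↔ α⁻¹ x < α⁻¹ y`. -/
def invDist {n : ℕ} (α β : Equiv.Perm (Fin n)) : ℕ :=
  (Finset.univ.filter fun p : Fin n × Fin n =>
    p.1 < p.2 ∧ ¬ ((α⁻¹ p.1 < α⁻¹ p.2) ↔ (β⁻¹ p.1 < β⁻¹ p.2))).card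
/-- `b` assigns to each `i : Fin n` the endpoints of the block of an ordered
partition of `(Fin n, <)` into consecutive intervals, and `τ` is the permutation
reversing the order of the elements inside every block. -/
def IsBlockData {n : ℕ} (b : Fin n → Fin n × Fin n) (τ : Equiv.Perm (Fin n)) : Prop :=
  ∀ i : Fin n, (b i).1 ≤ i ∧ i ≤ (b i).2 ∧
    (∀ j : Fin n, (b i).1 ≤ j → j ≤ (b i).2 → b j = b i) ∧
    ((τ i : ℕ) = (b i).1 + (b i).2 - (i : ℕ))

/-- `α` and `β` are adjacent in the big permutograph: `α = β * τ_π` for the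
block-reversal permutation `τ_π` of some nontrivial ordered partition `π`. -/
def PermAdjacent {n : ℕ} (α β : Equiv.Perm (Fin n)) : Prop :=
  ∃ τ : Equiv.Perm (Fin n), (∃ b, IsBlockData b τ) ∧ τ ≠ 1 ∧ α = β * τ


/-!
The inversion distance is left-invariant, so `d(β τ, β) = d(1, τ⁻¹)` is the number of
inversions of the block reversal `τ`. A pair `u < v` is inverted by `τ` exactly when `u` and `v`
lie in the same block, so the inversions are counted block by block, `|X_i|.choose 2` each.
-/

open Finset

lemma two_mul_card_filter_lt_of_symmetric {α : Type*} [Fintype α] [LinearOrder α]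
    (r : α → α → Prop) [DecidableRel r] (hr : ∀ x y, r x y → r y x) :
    2 * #{p : α × α | p.1 < p.2 ∧ r p.1 p.2} = #{p : α × α | p.1 ≠ p.2 ∧ r p.1 p.2} := by
  have hswap : #{p : α × α | p.1 < p.2 ∧ r p.1 p.2} = #{p : α × α | p.2 < p.1 ∧ r p.1 p.2} :=
    card_equiv (Equiv.prodComm α α) fun p => by
      simp only [mem_filter, mem_univ, true_and, Equiv.prodComm_apply, Prod.fst_swap,
        Prod.snd_swap]
      exact and_congr_right fun _ => ⟨hr _ _, hr _ _⟩
  rw [two_mul]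
  nth_rw 2 [hswap]
  rw [← card_union_of_disjoint (disjoint_filter.2 fun p _ h h' => lt_asymm h.1 h'.1),
    ← filter_or]
  congr 1
  ext p
  simp only [mem_filter, mem_univ, true_and, ne_iff_lt_or_gt, or_and_right]

lemma card_filter_lt_fiber_eq_sum_choose_two {α β : Type*} [Fintype α] [LinearOrder α]
    [DecidableEq β] (f : α → β) :
    #{p : α × α | p.1 < p.2 ∧ f p.1 = f p.2} =
      ∑ c ∈ univ.image f, (#{i | f i = c}).choose 2 := by
  rw [card_eq_sum_card_fiberwise (f := fun p => f p.1) (t := univ.image f)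
    (fun p _ => mem_image_of_mem f (mem_univ _))]
  refine sum_congr rfl fun c _ => ?_
  rw [← card_product_filter_lt]
  congr 1
  ext p
  simp only [mem_filter, mem_univ, true_and, mem_product]
  constructor
  · rintro ⟨⟨h, he⟩, rfl⟩; exact ⟨⟨rfl, he.symm⟩, h⟩
  · rintro ⟨⟨h1, h2⟩, h⟩; exact ⟨⟨h, h1.trans h2.symm⟩, h1⟩

/- Counting ordered pairs makes the set of disagreeing pairs a plain preimage under `γ × γ`. -/
lemma two_mul_invDist {n : ℕ} (α β : Equiv.Perm (Fin n)) :
    2 * invDist α β =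
      #{p : Fin n × Fin n | p.1 ≠ p.2 ∧ ¬((α⁻¹ p.1 < α⁻¹ p.2) ↔ (β⁻¹ p.1 < β⁻¹ p.2))} := by
  refine two_mul_card_filter_lt_of_symmetric
    (fun x y : Fin n => ¬((α⁻¹ x < α⁻¹ y) ↔ (β⁻¹ x < β⁻¹ y))) fun x y h => ?_
  rcases eq_or_ne x y with rfl | hxy
  · exact h
  · have hflip (σ : Equiv.Perm (Fin n)) : σ⁻¹ y < σ⁻¹ x ↔ ¬σ⁻¹ x < σ⁻¹ y := by
      rw [not_lt, lt_iff_le_and_ne, Ne, EmbeddingLike.apply_eq_iff_eq]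
      exact and_iff_left hxy.symm
    rwa [hflip, hflip, not_iff_not]

lemma invDist_mul_left {n : ℕ} (γ α β : Equiv.Perm (Fin n)) :
    invDist (γ * α) (γ * β) = invDist α β := by
  have h := two_mul_invDist (γ * α) (γ * β)
  rw [card_equiv (Equiv.prodCongr γ⁻¹ γ⁻¹) (t := {p : Fin n × Fin n | p.1 ≠ p.2 ∧
      ¬((α⁻¹ p.1 < α⁻¹ p.2) ↔ (β⁻¹ p.1 < β⁻¹ p.2))}) fun p => by simp [mul_inv_rev],
    ← two_mul_invDist] at h
  omega

lemma invDist_one_inv {n : ℕ} (σ : Equiv.Perm (Fin n)) :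
    invDist 1 σ⁻¹ = #{p : Fin n × Fin n | p.1 < p.2 ∧ σ p.2 < σ p.1} := by
  unfold invDist
  congr 1
  ext p
  simp only [mem_filter, mem_univ, true_and, inv_one, inv_inv, and_congr_right_iff]
  intro h
  simp [h, le_iff_lt_or_eq, h.ne']

lemma invDist_mul_self {n : ℕ} (β τ : Equiv.Perm (Fin n)) :
    invDist (β * τ) β = invDist 1 τ⁻¹ := by
  rw [← invDist_mul_left (β * τ)⁻¹]
  group

namespace IsBlockData

variable {n : ℕ} {b : Fin n → Fin n × Fin n} {τ : Equiv.Perm (Fin n)}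

lemma apply_eq_iff (hb : IsBlockData b τ) (i j : Fin n) :
    b j = b i ↔ (b i).1 ≤ j ∧ j ≤ (b i).2 :=
  ⟨fun h => h ▸ ⟨(hb j).1, (hb j).2.1⟩, fun h => (hb i).2.2.1 j h.1 h.2⟩

lemma snd_lt_fst_of_ne (hb : IsBlockData b τ) {u v : Fin n} (huv : u < v) (hne : b u ≠ b v) :
    (b u).2 < (b v).1 := by
  by_contra! h
  rcases le_or_gt v (b u).2 with hv | hv
  · exact hne ((hb.apply_eq_iff u v).2 ⟨((hb u).1.trans_lt huv).le, hv⟩).symm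
  · have hu : b (b u).2 = b u := (hb.apply_eq_iff u _).2 ⟨(hb u).1.trans (hb u).2.1, le_rfl⟩
    have hv : b (b u).2 = b v := (hb.apply_eq_iff v _).2 ⟨h, hv.le.trans (hb v).2.1⟩
    exact hne (hu.symm.trans hv)

lemma apply_mem_Icc (hb : IsBlockData b τ) (i : Fin n) : τ i ∈ Icc (b i).1 (b i).2 := by
  obtain ⟨h1, h2, -, hτ⟩ := hb i
  rw [mem_Icc, Fin.le_def, Fin.le_def, hτ]
  rw [Fin.le_def] at h1 h2
  omega

lemma apply_lt_apply_iff (hb : IsBlockData b τ) {u v : Fin n} (huv : u < v) :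
    τ v < τ u ↔ b u = b v := by
  refine ⟨fun hlt => ?_, fun h => ?_⟩
  · by_contra hne
    have := hb.snd_lt_fst_of_ne huv hne
    have hu := mem_Icc.1 (hb.apply_mem_Icc u)
    have hv := mem_Icc.1 (hb.apply_mem_Icc v)
    exact lt_asymm hlt (hu.2.trans_lt (this.trans_le hv.1))
  · have hu : (b v).1 ≤ u := h ▸ (hb u).1
    have hv : v ≤ (b v).2 := (hb v).2.1
    rw [Fin.lt_def, (hb v).2.2.2, (hb u).2.2.2, h]
    rw [Fin.lt_def] at huv
    rw [Fin.le_def] at hu hv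
    omega

lemma card_fiber (hb : IsBlockData b τ) (i : Fin n) :
    #{j | b j = b i} = ((b i).2 : ℕ) - (b i).1 + 1 := by
  have hle : (b i).1 ≤ (b i).2 := (hb i).1.trans (hb i).2.1
  rw [Fin.le_def] at hle
  rw [show ({j | b j = b i} : Finset (Fin n)) = Icc (b i).1 (b i).2 by
    ext j; simp [hb.apply_eq_iff], Fin.card_Icc]
  omega

end IsBlockData

/-- If `α` and `β` are `π`-adjacent, the inversion distance `d(α,β)` equals the
sum over the blocks `X_i` of `π` of `|X_i| choose 2`. -/
theorem invDist_pi_adjacent {n : ℕ} (α β τ : Equiv.Perm (Fin n))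
    (b : Fin n → Fin n × Fin n) (hb : IsBlockData b τ) (hadj : α = β * τ) :
    invDist α β =
      ∑ p ∈ Finset.image b Finset.univ, (((p.2 : ℕ) - (p.1 : ℕ) + 1).choose 2) := by
  rw [hadj, invDist_mul_self, invDist_one_inv,
    filter_congr fun p _ => and_congr_right hb.apply_lt_apply_iff,
    card_filter_lt_fiber_eq_sum_choose_two]
  refine sum_congr rfl fun p hp => ?_
  obtain ⟨i, -, rfl⟩ := mem_image.1 hp
  rw [hb.card_fiber]
end

section
/- A function F : S → X on a nonempty subset S of S_n satisfies the separation property if and only if F is a lattice polynomial, i.e., there is a family {K_i}_{i∈I} of subsets of X such that F(α) = ⋁_{i∈I} ⋀_{j∈K_i} j (meet and join with respect to ≤_α) for all α ∈ S. -/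
/-- `F` satisfies the separation property on `S`: for any `α, β ∈ S` there is
`u` with `u ≤_α F(α)` and `u ≥_β F(β)`, where `x ≤_α y ↔ α⁻¹ x ≤ α⁻¹ y`. -/
def SepProp {n : ℕ} (S : Set (Equiv.Perm (Fin n))) (F : Equiv.Perm (Fin n) → Fin n) : Prop :=
  ∀ α ∈ S, ∀ β ∈ S, ∃ u : Fin n, α⁻¹ u ≤ α⁻¹ (F α) ∧ β⁻¹ (F β) ≤ β⁻¹ u

/-- `F` is a lattice polynomial on `S`: `F(α) = ⋁_{K ∈ 𝒦} ⋀_{j ∈ K} j`, where the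
join and meet are taken in the linear order `≤_α` induced by `α`. -/
def IsLatticePoly {n : ℕ} (S : Set (Equiv.Perm (Fin n)))
    (F : Equiv.Perm (Fin n) → Fin n) : Prop :=
  ∃ (𝒦 : Finset (Finset (Fin n))) (h𝒦 : 𝒦.Nonempty) (hK : ∀ K ∈ 𝒦, K.Nonempty),
    ∀ α ∈ S, F α = α (𝒦.attach.sup' (Finset.attach_nonempty_iff.mpr h𝒦)
      fun K => K.1.inf' (hK K.1 K.2) fun j => α⁻¹ j)

/-!
A lattice polynomial `⋁_K ⋀_{j ∈ K} j` separates: given `α, β`, pick a clause `K₀` realising the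
`β`-join and let `u` be the `α`-least element of `K₀`; then `u ≤_α F(α)` because `u` is the
`α`-meet of one clause, and `F(β) ≤_β u` because `F(β)` is the `β`-meet of `K₀`.

Conversely, if `F` separates on `S`, take one clause per `β ∈ S`, namely the `β`-up-set of `F(β)`.
In the order `≤_α` the clause of `α` has meet exactly `F(α)`, and by separation every other clause
contains an element `u ≤_α F(α)`, so the join of the meets is `F(α)`.
-/

open Finset

namespace Finset

variable {ι X L : Type*}

theorem sup'_inf'_eq_of_forall_le_of_exists [Lattice L] {s : Finset ι} (hs : s.Nonempty)
    {t : ι → Finset X} (ht : ∀ i, (t i).Nonempty) {f : X → L} {a : L}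
    (hle : ∀ i ∈ s, ∃ u ∈ t i, f u ≤ a) (hge : ∃ i ∈ s, ∀ j ∈ t i, a ≤ f j) :
    s.sup' hs (fun i => (t i).inf' (ht i) f) = a := by
  obtain ⟨i₀, hi₀, hi₀_ge⟩ := hge
  refine le_antisymm (sup'_le _ _ fun i hi => ?_) (le_sup'_of_le _ hi₀ (le_inf' _ _ hi₀_ge))
  obtain ⟨u, hu, hua⟩ := hle i hi
  exact inf'_le_of_le _ hu hua

theorem exists_le_sup'_inf'_and_sup'_inf'_le {M : Type*} [LinearOrder L] [LinearOrder M]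
    {s : Finset ι} (hs : s.Nonempty) {t : ι → Finset X} (ht : ∀ i, (t i).Nonempty)
    (f : X → L) (g : X → M) :
    ∃ u, f u ≤ s.sup' hs (fun i => (t i).inf' (ht i) f) ∧
      s.sup' hs (fun i => (t i).inf' (ht i) g) ≤ g u := by
  obtain ⟨i₀, hi₀, hg⟩ := exists_mem_eq_sup' hs fun i => (t i).inf' (ht i) g
  obtain ⟨u, hu, hf⟩ := exists_mem_eq_inf' (ht i₀) f
  exact ⟨u, hf ▸ le_sup' (fun i => (t i).inf' (ht i) f) hi₀, hg ▸ inf'_le g hu⟩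

end Finset

section Perm

variable {n : ℕ}

def upperSetAt (F : Equiv.Perm (Fin n) → Fin n) (β : Equiv.Perm (Fin n)) : Finset (Fin n) :=
  univ.filter fun j => β⁻¹ (F β) ≤ β⁻¹ j

theorem mem_upperSetAt {F : Equiv.Perm (Fin n) → Fin n} {β : Equiv.Perm (Fin n)} {j : Fin n} :
    j ∈ upperSetAt F β ↔ β⁻¹ (F β) ≤ β⁻¹ j := by
  simp [upperSetAt]

theorem sepProp_of_isLatticePoly {S : Set (Equiv.Perm (Fin n))} {F : Equiv.Perm (Fin n) → Fin n}
    (hF : IsLatticePoly S F) : SepProp S F := by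
  obtain ⟨𝒦, h𝒦, hK, hF⟩ := hF
  intro α hα β hβ
  rw [hF α hα, hF β hβ]
  simp only [Equiv.Perm.inv_def, Equiv.symm_apply_apply]
  exact exists_le_sup'_inf'_and_sup'_inf'_le _ (fun K : 𝒦 => hK K.1 K.2) _ _

theorem isLatticePoly_of_sepProp {S : Set (Equiv.Perm (Fin n))} (hS : S.Nonempty)
    {F : Equiv.Perm (Fin n) → Fin n} (hsep : SepProp S F) : IsLatticePoly S F := by
  classical
  set 𝒦 := S.toFinite.toFinset.image (upperSetAt F)
  have mem_𝒦 {β} (hβ : β ∈ S) : upperSetAt F β ∈ 𝒦 :=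
    mem_image_of_mem _ (S.toFinite.mem_toFinset.mpr hβ)
  obtain ⟨β₀, hβ₀⟩ := hS
  refine ⟨𝒦, ⟨_, mem_𝒦 hβ₀⟩, ?_, fun α hα => ?_⟩
  · simp only [𝒦, mem_image, Set.Finite.mem_toFinset]
    rintro _ ⟨β, -, rfl⟩
    exact ⟨F β, mem_upperSetAt.mpr le_rfl⟩
  rw [← Equiv.Perm.inv_eq_iff_eq]
  refine (sup'_inf'_eq_of_forall_le_of_exists _ _ ?_ ⟨⟨_, mem_𝒦 hα⟩, mem_attach _ _, ?_⟩).symm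
  · rintro ⟨K, hK⟩ -
    obtain ⟨β, hβ, rfl⟩ := mem_image.mp hK
    obtain ⟨u, huα, huβ⟩ := hsep α hα β (S.toFinite.mem_toFinset.mp hβ)
    exact ⟨u, mem_upperSetAt.mpr huβ, huα⟩
  · exact fun j => mem_upperSetAt.mp

end Perm

/-- A function on a nonempty set of permutations satisfies the separation
property iff it is a lattice polynomial. -/
theorem sepProp_iff_isLatticePoly {n : ℕ} (S : Set (Equiv.Perm (Fin n)))
    (hS : S.Nonempty) (F : Equiv.Perm (Fin n) → Fin n) :
    SepProp S F ↔ IsLatticePoly S F :=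
  ⟨isLatticePoly_of_sepProp hS, sepProp_of_isLatticePoly⟩
end

section
/- Let S be the vertex set of a permutograph on S_n (an isometric subgraph of the big permutograph with the inversion-distance weights). A function F : S → X is a discrete piecewise linear function if and only if it satisfies the separation property. -/
/-- `S` is the vertex set of a permutograph: any two of its vertices are joined by
a path inside `S`, consisting of adjacent permutations, whose total weight (sum of
inversion distances of consecutive vertices) equals the inversion distance of the
endpoints (i.e. `S` is a connected isometric subgraph of the big permutograph). -/
def IsPermutograph {n : ℕ} (S : Set (Equiv.Perm (Fin n))) : Prop :=
  ∀ α ∈ S, ∀ β ∈ S, ∃ (m : ℕ) (c : ℕ → Equiv.Perm (Fin n)),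
    c 0 = α ∧ c m = β ∧ (∀ i ≤ m, c i ∈ S) ∧
    (∀ i < m, PermAdjacent (c i) (c (i + 1))) ∧
    ∑ i ∈ Finset.range m, invDist (c i) (c (i + 1)) = invDist α β

/-- `F` is a discrete piecewise linear function on `S`: for any two `π`-adjacent
`α, β ∈ S`, the values `F(α)` and `F(β)` occupy positions in the same block of `π`,
i.e. `F(α) ∈ α(X_i)` and `F(β) ∈ β(X_i)` for the same block `X_i`. -/
def IsDPL {n : ℕ} (S : Set (Equiv.Perm (Fin n))) (F : Equiv.Perm (Fin n) → Fin n) : Prop :=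
  ∀ α ∈ S, ∀ β ∈ S, ∀ (τ : Equiv.Perm (Fin n)) (b : Fin n → Fin n × Fin n),
    IsBlockData b τ → τ ≠ 1 → α = β * τ →
      b (α⁻¹ (F α)) = b (β⁻¹ (F β))

/-!
Write `u ≤_α v` for `α⁻¹ u ≤ α⁻¹ v`. Under `α = β * τ` a block reversal, `β⁻¹ = τ ∘ α⁻¹`,
and `τ` preserves every block while block indices are monotone; so a separating witness
between `(α, F α)` and `(β, F β)` in each direction forces `F α` and `F β` into the same block.
Conversely, if they lie in a common block `[l, r]`, the element at `α`-position `l` sits at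
`β`-position `r` and separates the two. Along a geodesic path separation then propagates:
if both intermediate witnesses `u, v` failed, the pair `{u, v}` would be inverted on the way to
the middle vertex and inverted back afterwards, so the path would not be geodesic.
-/

open Equiv Finset

section PathLength

variable {ι : Type*}

lemma dist_le_sum_path (d : ι → ι → ℕ) (d_self : ∀ x, d x x = 0)
    (d_triangle : ∀ x y z, d x z ≤ d x y + d y z) (c : ℕ → ι) {a b : ℕ} (hab : a ≤ b) :
    d (c a) (c b) ≤ ∑ i ∈ Ico a b, d (c i) (c (i + 1)) := by
  induction b, hab using Nat.le_induction with
  | base => simp [d_self]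
  | succ b hab ih =>
    rw [sum_Ico_succ_top hab]
    exact (d_triangle _ (c b) _).trans (Nat.add_le_add_right ih _)

lemma add_le_dist_of_sum_path_eq (d : ι → ι → ℕ) (d_self : ∀ x, d x x = 0)
    (d_triangle : ∀ x y z, d x z ≤ d x y + d y z) (c : ℕ → ι) {m : ℕ}
    (hgeo : ∑ i ∈ range m, d (c i) (c (i + 1)) = d (c 0) (c m)) {k : ℕ} (hk : k < m) :
    d (c 0) (c k) + d (c k) (c (k + 1)) ≤ d (c 0) (c (k + 1)) := by
  have hsplit : ∑ i ∈ range m, d (c i) (c (i + 1)) = ∑ i ∈ Ico 0 k, d (c i) (c (i + 1)) +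
      d (c k) (c (k + 1)) + ∑ i ∈ Ico (k + 1) m, d (c i) (c (i + 1)) := by
    rw [range_eq_Ico, ← sum_Ico_consecutive _ (Nat.zero_le _) hk, sum_Ico_succ_top k.zero_le]
  have hhead := dist_le_sum_path d d_self d_triangle c k.zero_le
  have htail := dist_le_sum_path d d_self d_triangle c (show k + 1 ≤ m from hk)
  have hwhole := d_triangle (c 0) (c (k + 1)) (c m)
  omega

end PathLength

section InversionDistance

variable {n : ℕ}

def invPairs (α β : Perm (Fin n)) : Finset (Fin n × Fin n) :=
  univ.filter fun p => p.1 < p.2 ∧ ¬ ((α⁻¹ p.1 < α⁻¹ p.2) ↔ (β⁻¹ p.1 < β⁻¹ p.2))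

lemma invDist_eq_card_invPairs (α β : Perm (Fin n)) : invDist α β = #(invPairs α β) := rfl

lemma mem_invPairs {α β : Perm (Fin n)} {p : Fin n × Fin n} :
    p ∈ invPairs α β ↔ p.1 < p.2 ∧ ¬ ((α⁻¹ p.1 < α⁻¹ p.2) ↔ (β⁻¹ p.1 < β⁻¹ p.2)) := by
  simp [invPairs]

lemma invPairs_subset_union (α γ β : Perm (Fin n)) :
    invPairs α β ⊆ invPairs α γ ∪ invPairs γ β := by
  intro p hp
  simp only [mem_union, mem_invPairs] at hp ⊢
  tauto

lemma invDist_self (α : Perm (Fin n)) : invDist α α = 0 := by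
  simp [invDist_eq_card_invPairs, invPairs]

lemma invDist_triangle (α γ β : Perm (Fin n)) :
    invDist α β ≤ invDist α γ + invDist γ β :=
  (card_le_card (invPairs_subset_union α γ β)).trans (card_union_le _ _)

lemma invDist_lt_add_of_mem_invPairs {α γ β : Perm (Fin n)} {p : Fin n × Fin n}
    (hαγ : p ∈ invPairs α γ) (hαβ : p ∉ invPairs α β) :
    invDist α β < invDist α γ + invDist γ β := by
  have hssub : invPairs α β ⊂ invPairs α γ ∪ invPairs γ β :=
    (ssubset_iff_of_subset (invPairs_subset_union α γ β)).2 ⟨p, mem_union_left _ hαγ, hαβ⟩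
  exact (card_lt_card hssub).trans_le (card_union_le _ _)

lemma invDist_lt_add_of_inversion {α γ β : Perm (Fin n)} {u v : Fin n}
    (hα : α⁻¹ u < α⁻¹ v) (hγ : γ⁻¹ v < γ⁻¹ u) (hβ : β⁻¹ u < β⁻¹ v) :
    invDist α β < invDist α γ + invDist γ β := by
  rcases lt_trichotomy u v with huv | rfl | hvu
  · exact invDist_lt_add_of_mem_invPairs (p := (u, v))
      (mem_invPairs.2 ⟨huv, fun h => hγ.not_gt (h.1 hα)⟩)
      fun hp => (mem_invPairs.1 hp).2 (iff_of_true hα hβ)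
  · exact absurd hα (lt_irrefl _)
  · exact invDist_lt_add_of_mem_invPairs (p := (v, u))
      (mem_invPairs.2 ⟨hvu, fun h => hα.not_gt (h.2 hγ)⟩)
      fun hp => (mem_invPairs.1 hp).2 (iff_of_false hα.not_gt hβ.not_gt)

end InversionDistance

section Separation

variable {n : ℕ}

def IsSeparated (α : Perm (Fin n)) (x : Fin n) (β : Perm (Fin n)) (y : Fin n) : Prop :=
  ∃ u : Fin n, α⁻¹ u ≤ α⁻¹ x ∧ β⁻¹ y ≤ β⁻¹ u

lemma IsSeparated.refl (α : Perm (Fin n)) (x : Fin n) : IsSeparated α x α x :=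
  ⟨x, le_rfl, le_rfl⟩

lemma IsSeparated.trans_of_add_le {α γ β : Perm (Fin n)} {x y z : Fin n}
    (hgeo : invDist α γ + invDist γ β ≤ invDist α β)
    (h₁ : IsSeparated α x γ y) (h₂ : IsSeparated γ y β z) : IsSeparated α x β z := by
  obtain ⟨u, hux, hyu⟩ := h₁
  obtain ⟨v, hvy, hzv⟩ := h₂
  by_contra h
  have hα : α⁻¹ u < α⁻¹ v := hux.trans_lt (not_le.1 fun hxv => h ⟨v, hxv, hzv⟩)
  have hβ : β⁻¹ u < β⁻¹ v := (not_le.1 fun hzu => h ⟨u, hux, hzu⟩).trans_le hzv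
  have hγ : γ⁻¹ v < γ⁻¹ u := (hvy.trans hyu).lt_of_ne fun e => by
    rw [(γ⁻¹).injective e] at hα
    exact lt_irrefl _ hα
  exact (invDist_lt_add_of_inversion hα hγ hβ).not_ge hgeo

lemma IsSeparated.of_geodesic_path (c : ℕ → Perm (Fin n)) (x : ℕ → Fin n) {m : ℕ}
    (hgeo : ∑ i ∈ range m, invDist (c i) (c (i + 1)) = invDist (c 0) (c m))
    (hstep : ∀ i < m, IsSeparated (c i) (x i) (c (i + 1)) (x (i + 1))) :
    IsSeparated (c 0) (x 0) (c m) (x m) := by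
  suffices ∀ k ≤ m, IsSeparated (c 0) (x 0) (c k) (x k) from this m le_rfl
  intro k
  induction k with
  | zero => exact fun _ => .refl _ _
  | succ k ih =>
    intro hk
    exact (ih (Nat.le_of_succ_le hk)).trans_of_add_le
      (add_le_dist_of_sum_path_eq invDist invDist_self invDist_triangle c hgeo hk) (hstep k hk)

end Separation

namespace IsBlockData

variable {n : ℕ} {b : Fin n → Fin n × Fin n} {τ : Perm (Fin n)}

lemma apply_fst (hb : IsBlockData b τ) (i : Fin n) : b (b i).1 = b i :=
  (hb i).2.2.1 _ le_rfl ((hb i).1.trans (hb i).2.1)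

lemma apply_perm (hb : IsBlockData b τ) (i : Fin n) : b (τ i) = b i := by
  obtain ⟨hl, hr, hblock, hτ⟩ := hb i
  rw [Fin.le_def] at hl hr
  exact hblock _ (Fin.le_def.2 (by omega)) (Fin.le_def.2 (by omega))

lemma perm_fst (hb : IsBlockData b τ) (i : Fin n) : τ (b i).1 = (b i).2 := by
  have h := (hb (b i).1).2.2.2
  rw [hb.apply_fst] at h
  ext
  omega

lemma fst_mono (hb : IsBlockData b τ) : Monotone fun i => (b i).1 := by
  intro i j hij
  by_contra! hlt
  have hj : b (b i).1 = b j :=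
    (hb j).2.2.1 _ hlt.le (((hb i).1.trans hij).trans (hb j).2.1)
  rw [hb.apply_fst] at hj
  exact hlt.ne (congrArg Prod.fst hj).symm

lemma eq_of_fst_eq (hb : IsBlockData b τ) {i j : Fin n} (h : (b i).1 = (b j).1) : b i = b j := by
  rw [← hb.apply_fst i, h, hb.apply_fst j]

lemma isSeparated_of_eq (hb : IsBlockData b τ) {α β : Perm (Fin n)} (hαβ : α = β * τ)
    {x y : Fin n} (h : b (α⁻¹ x) = b (β⁻¹ y)) : IsSeparated α x β y := by
  refine ⟨α (b (α⁻¹ x)).1, by simpa using (hb _).1, ?_⟩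
  have hβα : β⁻¹ (α (b (α⁻¹ x)).1) = τ (b (α⁻¹ x)).1 := by simp [hαβ]
  rw [hβα, hb.perm_fst, h]
  exact (hb _).2.1

lemma fst_le_of_isSeparated (hb : IsBlockData b τ) {σ : Perm (Fin n)}
    (hσ : ∀ i, b (σ i) = b i) {α β : Perm (Fin n)} (hαβ : α = β * σ) {x y : Fin n}
    (h : IsSeparated α x β y) : (b (β⁻¹ y)).1 ≤ (b (α⁻¹ x)).1 := by
  obtain ⟨u, hux, hyu⟩ := h
  have hu : β⁻¹ u = σ (α⁻¹ u) := by simp [hαβ]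
  calc (b (β⁻¹ y)).1 ≤ (b (β⁻¹ u)).1 := hb.fst_mono hyu
    _ = (b (α⁻¹ u)).1 := by rw [hu, hσ]
    _ ≤ (b (α⁻¹ x)).1 := hb.fst_mono hux

lemma eq_of_isSeparated (hb : IsBlockData b τ) {α β : Perm (Fin n)} (hαβ : α = β * τ)
    {x y : Fin n} (h₁ : IsSeparated α x β y) (h₂ : IsSeparated β y α x) :
    b (α⁻¹ x) = b (β⁻¹ y) := by
  have hτ_inv : ∀ i, b (τ⁻¹ i) = b i := fun i => by
    simpa using (hb.apply_perm (τ⁻¹ i)).symm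
  refine hb.eq_of_fst_eq (le_antisymm ?_ (hb.fst_le_of_isSeparated hb.apply_perm hαβ h₁))
  exact hb.fst_le_of_isSeparated hτ_inv (by rw [hαβ, mul_inv_cancel_right]) h₂

end IsBlockData

theorem isDPL_iff_sepProp_general {n : ℕ} (S : Set (Equiv.Perm (Fin n)))
    (hperm : IsPermutograph S) (F : Equiv.Perm (Fin n) → Fin n) :
    IsDPL S F ↔ SepProp S F := by
  constructor
  · intro hF α hα β hβ
    obtain ⟨m, c, rfl, rfl, hmem, hadj, hgeo⟩ := hperm α hα β hβ
    refine IsSeparated.of_geodesic_path c (fun i => F (c i)) hgeo fun i hi => ?_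
    obtain ⟨τ, ⟨b, hb⟩, hτ, hc⟩ := hadj i hi
    exact hb.isSeparated_of_eq hc (hF _ (hmem i hi.le) _ (hmem (i + 1) hi) τ b hb hτ hc)
  · intro hF α hα β hβ τ b hb _ hαβ
    exact hb.eq_of_isSeparated hαβ (hF α hα β hβ) (hF β hβ α hα)

/-- On the vertex set of a permutograph, a function is a discrete piecewise
linear function iff it satisfies the separation property. -/
theorem isDPL_iff_sepProp {n : ℕ} (S : Set (Equiv.Perm (Fin n))) (hS : S.Nonempty)
    (hperm : IsPermutograph S) (F : Equiv.Perm (Fin n) → Fin n) :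
    IsDPL S F ↔ SepProp S F :=
  isDPL_iff_sepProp_general S hperm F
end

section
/- Every lattice polynomial function F(α) = ⋁_{i∈I} ⋀_{j∈K_i} j (operations taken in the order ≤_α) on a set S of permutations satisfies the separation property: for all α, β ∈ S there exists u ∈ X with u ≤_α F(α) and u ≥_β F(β). -/
/- Take `u` to be the `f`-minimum of a block `t k` at which the `g`-supremum is attained. -/
theorem Finset.exists_le_sup'_inf'_and_sup'_inf'_le_s10 {ι κ α β : Type*} [LinearOrder α]
    [LinearOrder β] {s : Finset κ} (hs : s.Nonempty) (t : κ → Finset ι)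
    (ht : ∀ k, (t k).Nonempty) (f : ι → α) (g : ι → β) :
    ∃ u, f u ≤ s.sup' hs (fun k => (t k).inf' (ht k) f) ∧
      s.sup' hs (fun k => (t k).inf' (ht k) g) ≤ g u := by
  obtain ⟨k, hk, hk_sup⟩ := s.exists_mem_eq_sup' hs fun k => (t k).inf' (ht k) g
  obtain ⟨u, hu, hu_inf⟩ := (t k).exists_mem_eq_inf' (ht k) f
  refine ⟨u, ?_, ?_⟩
  · rw [← hu_inf]
    exact s.le_sup' (fun k => (t k).inf' (ht k) f) hk
  · rw [hk_sup]
    exact (t k).inf'_le g hu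

/-- Every lattice polynomial function on a set of permutations satisfies the
separation property. -/
theorem isLatticePoly_sepProp {n : ℕ} (S : Set (Equiv.Perm (Fin n)))
    (F : Equiv.Perm (Fin n) → Fin n) (hF : IsLatticePoly S F) :
    SepProp S F := by
  obtain ⟨𝒦, h𝒦, hK, hpoly⟩ := hF
  intro α hα β hβ
  obtain ⟨u, hα_le, hβ_le⟩ := Finset.exists_le_sup'_inf'_and_sup'_inf'_le_s10
    (Finset.attach_nonempty_iff.mpr h𝒦) Subtype.val (fun K => hK K.1 K.2) (α⁻¹ ·) (β⁻¹ ·)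
  refine ⟨u, ?_, ?_⟩
  · simpa only [hpoly α hα, Equiv.Perm.coe_inv, Equiv.symm_apply_apply] using hα_le
  · simpa only [hpoly β hβ, Equiv.Perm.coe_inv, Equiv.symm_apply_apply] using hβ_le
end

section
/- Let X be a linear order that is connected in its interval (order) topology. Then each chamber O_α = {(x_1,...,x_d) ∈ X^d : x_{α(1)} < x_{α(2)} < ⋯ < x_{α(d)}} is a connected subset of X^d with the product topology. -/
/-!
Any two strictly increasing tuples `x`, `y` can be joined, inside the set of strictly increasing
tuples, to their coordinatewise minimum `x ⊓ y`: lower the coordinates of `x` to those of `x ⊓ y`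
one at a time, smallest index first. Each move runs through a closed interval in one coordinate,
which is connected because it is a continuous retract of the connected space `X` (via `projIcc`).
A connected order is dense, so strictly increasing tuples exist, and permuting the coordinates is
a homeomorphism.
-/

open Set Function

theorem isPreconnected_Icc_of_preconnectedSpace {X : Type*} [LinearOrder X] [TopologicalSpace X]
    [OrderTopology X] [PreconnectedSpace X] (a b : X) : IsPreconnected (Icc a b) := by
  by_cases hab : a ≤ b
  · have hrange : range (Subtype.val ∘ projIcc a b hab) = Icc a b := by
      rw [range_comp, range_projIcc, image_univ, Subtype.range_coe]
    exact hrange ▸ isPreconnected_range (continuous_subtype_val.comp continuous_projIcc)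
  · exact Icc_eq_empty hab ▸ isPreconnected_empty

theorem update_mem_connectedComponentIn {ι X : Type*} [DecidableEq ι] [LinearOrder X]
    [TopologicalSpace X] [OrderTopology X] [PreconnectedSpace X] {S : Set (ι → X)}
    {x : ι → X} {k : ι} {a b c : X} (hS : ∀ c ∈ Icc a b, update x k c ∈ S)
    (hx : x k ∈ Icc a b) (hc : c ∈ Icc a b) : update x k c ∈ connectedComponentIn S x := by
  have hcont : Continuous (update x k) := continuous_const.update k continuous_id
  exact ((isPreconnected_Icc_of_preconnectedSpace a b).image _
    hcont.continuousOn).subset_connectedComponentIn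
    ⟨x k, hx, update_eq_self k x⟩ (image_subset_iff.2 hS) (mem_image_of_mem _ hc)

section StrictMono

variable {ι X : Type*} [Preorder ι] [Preorder X]

theorem StrictMono.update_of_le_of_le [DecidableEq ι] {f : ι → X} {k : ι} {a b c : X}
    (ha : StrictMono (update f k a)) (hb : StrictMono (update f k b)) (hac : a ≤ c)
    (hcb : c ≤ b) : StrictMono (update f k c) := by
  intro i j hij
  rcases eq_or_ne i k with rfl | hik
  · have hjk : j ≠ i := hij.ne'
    simpa [hjk] using hcb.trans_lt (by simpa [hjk] using hb hij)
  rcases eq_or_ne j k with rfl | hjk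
  · simpa [hik] using (by simpa [hik] using ha hij : f i < a).trans_le hac
  · simpa [hik, hjk] using ha hij

theorem StrictMono.piecewise_of_isLowerSet [DecidableEq ι] {s : Finset ι} {f g : ι → X}
    (hs : IsLowerSet (s : Set ι)) (hf : StrictMono f) (hg : StrictMono g) (hfg : f ≤ g) :
    StrictMono (s.piecewise f g) := by
  intro i j hij
  by_cases hj : j ∈ s
  · have hi : i ∈ s := hs hij.le hj
    simpa [hi, hj] using hf hij
  by_cases hi : i ∈ s
  · simpa [hi, hj] using (hf hij).trans_le (hfg j)
  · simpa [hi, hj] using hg hij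

end StrictMono

section Chamber

variable {ι X : Type*} [LinearOrder ι] [LinearOrder X] [TopologicalSpace X] [OrderTopology X]
  [PreconnectedSpace X]

theorem piecewise_mem_connectedComponentIn_setOf_strictMono [DecidableEq ι] {m x : ι → X}
    (hm : StrictMono m) (hx : StrictMono x) (hmx : m ≤ x) {s : Finset ι}
    (hs : IsLowerSet (s : Set ι)) :
    s.piecewise m x ∈ connectedComponentIn {y | StrictMono y} x := by
  induction s using Finset.induction_on_max with
  | empty => simpa using mem_connectedComponentIn (F := {y | StrictMono y}) hx
  | insert a s hlt ih =>
    have hs' : IsLowerSet (s : Set ι) := fun i j hji hi => by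
      rcases Finset.mem_insert.1 (hs hji (Finset.mem_insert_of_mem hi)) with rfl | hj
      exacts [absurd (hlt i hi) hji.not_gt, hj]
    have ha : a ∉ s := fun h => lt_irrefl a (hlt a h)
    have hinsert := hm.piecewise_of_isLowerSet hs hx hmx
    have hprev := hm.piecewise_of_isLowerSet hs' hx hmx
    rw [Finset.piecewise_insert] at hinsert ⊢
    rw [connectedComponentIn_eq (ih hs')]
    refine update_mem_connectedComponentIn (a := m a) (b := x a) (fun c hc => ?_)
      (by simp [ha, hmx a]) ⟨le_rfl, hmx a⟩
    refine hinsert.update_of_le_of_le ?_ hc.1 hc.2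
    rwa [show x a = s.piecewise m x a by simp [ha], update_eq_self]

theorem mem_connectedComponentIn_setOf_strictMono_of_le [Finite ι] {m x : ι → X}
    (hm : StrictMono m) (hx : StrictMono x) (hmx : m ≤ x) :
    m ∈ connectedComponentIn {y | StrictMono y} x := by
  classical
  have := Fintype.ofFinite ι
  simpa using piecewise_mem_connectedComponentIn_setOf_strictMono hm hx hmx
    (s := Finset.univ) (by simpa using isLowerSet_univ)

theorem isPreconnected_setOf_strictMono [Finite ι] :
    IsPreconnected {y : ι → X | StrictMono y} := by
  refine isPreconnected_of_forall_pair fun x hx y hy => ?_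
  have hxy : StrictMono (x ⊓ y) := fun i j hij => min_lt_min (hx hij) (hy hij)
  have hyx : y ∈ connectedComponentIn {y | StrictMono y} x := by
    rw [connectedComponentIn_eq
        (mem_connectedComponentIn_setOf_strictMono_of_le hxy hx inf_le_left),
      ← connectedComponentIn_eq
        (mem_connectedComponentIn_setOf_strictMono_of_le hxy hy inf_le_right)]
    exact mem_connectedComponentIn hy
  exact ⟨_, connectedComponentIn_subset _ _, mem_connectedComponentIn hx, hyx,
    isPreconnected_connectedComponentIn⟩

theorem isConnected_setOf_strictMono [Finite ι] [Nontrivial X] :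
    IsConnected {y : ι → X | StrictMono y} := by
  have := denselyOrdered_of_preconnectedSpace (α := X)
  obtain ⟨f⟩ := Order.embedding_from_countable_to_dense (α := ι) (β := X)
  exact ⟨⟨f, f.strictMono⟩, isPreconnected_setOf_strictMono⟩

end Chamber

/-- In the `d`-th power of a linear order `X` connected in its order topology,
each chamber `O_α = {x : x_{α(1)} < ⋯ < x_{α(d)}}` is a connected set. -/
theorem chamber_isConnected (X : Type*) [LinearOrder X] [TopologicalSpace X]
    [OrderTopology X] [ConnectedSpace X] [Nontrivial X]
    (d : ℕ) (α : Equiv.Perm (Fin d)) :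
    IsConnected {x : Fin d → X | StrictMono fun i => x (α i)} :=
  (Homeomorph.piCongrLeft (Y := fun _ => X) α).symm.isConnected_preimage.2
    isConnected_setOf_strictMono
end

section
/- Let X be a linear order without gaps (every nonempty open interval (a,b) with a < b is nonempty). Then each chamber O_α ⊆ X^d is open, and the union of all chambers is dense in X^d. -/
/-!
Chambers are open because they are cut out by finitely many strict inequalities between
coordinates. A point with pairwise distinct coordinates lies in the chamber of the permutation
sorting it, and such points are dense: in a dense order every nonempty open interval is
infinite, so coordinates can be chosen one at a time in prescribed open sets, avoiding the
finitely many values already used.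
-/

open Set Filter Topology

theorem isOpen_setOf_strictMono {ι X : Type*} [Preorder ι] [Finite ι] [LinearOrder X]
    [TopologicalSpace X] [OrderClosedTopology X] :
    IsOpen {x : ι → X | StrictMono x} := by
  simp only [StrictMono, ofPred_forall]
  exact isOpen_iInter_of_finite fun i => isOpen_iInter_of_finite fun j =>
    isOpen_iInter_of_finite fun _ => isOpen_lt (continuous_apply i) (continuous_apply j)

theorem exists_injective_forall_mem_of_infinite {X : Type*} :
    ∀ {n : ℕ} (u : Fin n → Set X), (∀ i, (u i).Infinite) →
      ∃ y : Fin n → X, Function.Injective y ∧ ∀ i, y i ∈ u i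
  | 0, _, _ => ⟨Fin.elim0, fun i => i.elim0, fun i => i.elim0⟩
  | _ + 1, u, hu => by
    obtain ⟨y, hy_inj, hy_mem⟩ := exists_injective_forall_mem_of_infinite (fun i => u i.succ)
      fun i => hu i.succ
    obtain ⟨y₀, hy₀u, hy₀y⟩ := ((hu 0).sdiff (finite_range y)).nonempty
    exact ⟨Fin.cons y₀ y, Fin.cons_injective_iff.2 ⟨hy₀y, hy_inj⟩,
      Fin.cases hy₀u hy_mem⟩

theorem dense_setOf_injective {ι X : Type*} [Finite ι] [TopologicalSpace X] [T1Space X]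
    [∀ x : X, (𝓝[≠] x).NeBot] :
    Dense {x : ι → X | Function.Injective x} := by
  obtain ⟨n, ⟨e⟩⟩ := Finite.exists_equiv_fin ι
  refine dense_iff_inter_open.2 fun U hU ⟨x, hx⟩ => ?_
  obtain ⟨u, hu, hu_sub⟩ := isOpen_pi_iff'.1 hU x hx
  have hu_inf (i : ι) : (u i).Infinite := infinite_of_mem_nhds (x i) ((hu i).1.mem_nhds (hu i).2)
  obtain ⟨y, hy_inj, hy_mem⟩ :=
    exists_injective_forall_mem_of_infinite (fun k => u (e.symm k)) fun k => hu_inf _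
  refine ⟨y ∘ e, hu_sub fun i _ => ?_, hy_inj.comp e.injective⟩
  simpa using hy_mem (e i)

theorem Tuple.strictMono_comp_sort_of_injective {n : ℕ} {X : Type*} [LinearOrder X]
    {x : Fin n → X} (hx : Function.Injective x) : StrictMono (x ∘ Tuple.sort x) :=
  (Tuple.monotone_sort x).strictMono_of_injective (hx.comp (Tuple.sort x).injective)

/-- For a linear order `X` without gaps (i.e. densely ordered), every chamber
`O_α ⊆ X^d` is open and the union of all chambers is dense in `X^d`. -/
theorem chambers_open_and_union_dense (X : Type*) [LinearOrder X] [TopologicalSpace X]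
    [OrderTopology X] [DenselyOrdered X] [Nontrivial X] (d : ℕ) :
    (∀ α : Equiv.Perm (Fin d), IsOpen {x : Fin d → X | StrictMono fun i => x (α i)}) ∧
    Dense (⋃ α : Equiv.Perm (Fin d), {x : Fin d → X | StrictMono fun i => x (α i)}) := by
  refine ⟨fun α => ?_, dense_setOf_injective.mono fun x hx => ?_⟩
  · exact isOpen_setOf_strictMono.preimage (continuous_pi fun i => continuous_apply (α i) :
      Continuous fun (x : Fin d → X) i => x (α i))
  · exact mem_iUnion.2 ⟨Tuple.sort x, Tuple.strictMono_comp_sort_of_injective hx⟩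
end

section
/- Let X be a connected linear order (in its order topology). A function f : X^d → X is a continuous coordinate selector (for every x there is i with f(x) = x_i) if and only if f is a lattice polynomial in the coordinates, i.e., f(x) = ⋁_{i∈I} ⋀_{j∈K_i} x_j for some family {K_i}_{i∈I} of nonempty subsets of {1,...,d}. -/
/-!
A continuous `g : X → X` that fixes every point it does not send into a finite set `C` is
monotone: by the intermediate value theorem every value between `g a` and `g b` outside `C` is a
fixed point lying in `[a, b]`. Applied along suitable paths, this makes a continuous selector `f`
monotone and homogeneous: `f (x ⊓ t) = f x ⊓ t` and `f (x ⊔ t) = f x ⊔ t`. For such an `f`,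
whether it picks the upper level of a two-level vector (`s` on `A`, `b < s` off `A`) depends only
on `A`. Hence `K x = {j | f x ≤ x j}` satisfies `min_{j ∈ K x} y j ≤ f y` for every `y`, and `f`
is the join, over all `K` with this property, of `min_{j ∈ K}`.
-/

open Set

section ConnectedOrder

variable {X : Type*} [LinearOrder X] [TopologicalSpace X] [OrderTopology X] [ConnectedSpace X]

theorem isPreconnected_Icc_of_connectedSpace (a b : X) : IsPreconnected (Icc a b) := by
  rcases lt_or_ge b a with hba | hab
  · rw [Icc_eq_empty_of_lt hba]
    exact isPreconnected_empty
  · have hrange : Icc a b = range (fun t => (projIcc a b hab t : X)) := by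
      rw [range_comp' Subtype.val, range_projIcc, image_univ, Subtype.range_coe]
    rw [hrange]
    exact isPreconnected_range (continuous_subtype_val.comp continuous_projIcc)

theorem exists_mem_Ioo_notMem_finset {a b : X} (hab : a < b) (C : Finset X) :
    ∃ v ∈ Ioo a b, v ∉ C :=
  haveI := denselyOrdered_of_preconnectedSpace (α := X)
  (Ioo_infinite hab).exists_notMem_finset C

variable {g : X → X} {C : Finset X}

theorem mem_Icc_and_eq_self_of_mem_uIcc (hg : Continuous g) (hgC : ∀ t, g t = t ∨ g t ∈ C)
    {a b v : X} (hab : a ≤ b) (hv : v ∈ uIcc (g a) (g b)) (hvC : v ∉ C) :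
    v ∈ Icc a b ∧ g v = v := by
  have hIcc := isPreconnected_Icc_of_connectedSpace a b
  have ha : a ∈ Icc a b := left_mem_Icc.2 hab
  have hb : b ∈ Icc a b := right_mem_Icc.2 hab
  obtain ⟨t, ht, rfl⟩ : v ∈ g '' Icc a b := by
    rcases mem_uIcc.1 hv with hv | hv
    · exact hIcc.intermediate_value ha hb hg.continuousOn hv
    · exact hIcc.intermediate_value hb ha hg.continuousOn hv
  rcases hgC t with hgt | hgt
  · rw [hgt]
    exact ⟨ht, hgt⟩
  · exact absurd hgt hvC

theorem monotone_of_eq_self_or_mem (hg : Continuous g) (hgC : ∀ t, g t = t ∨ g t ∈ C) :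
    Monotone g := by
  intro a b hab
  by_contra! hba
  obtain ⟨v, hv, hvC⟩ := exists_mem_Ioo_notMem_finset hba C
  obtain ⟨hvab, hgv⟩ :=
    mem_Icc_and_eq_self_of_mem_uIcc hg hgC hab (mem_uIcc.2 (Or.inr ⟨hv.1.le, hv.2.le⟩)) hvC
  obtain ⟨w, hw, hwC⟩ := exists_mem_Ioo_notMem_finset hv.1 C
  have hw' : w ∈ uIcc (g v) (g b) := mem_uIcc.2 (Or.inr ⟨hw.1.le, hw.2.le.trans_eq hgv.symm⟩)
  exact (mem_Icc_and_eq_self_of_mem_uIcc hg hgC hvab.2 hw' hwC).1.1.not_gt hw.2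

end ConnectedOrder

section ContinuousSelector

variable {X ι : Type*} {f : (ι → X) → X}

theorem eq_self_or_mem_of_selector (hsel : ∀ x, ∃ i, f x = x i) {p : X → ι → X}
    {C : Finset X} (hp : ∀ t i, p t i = t ∨ p t i ∈ C) (t : X) :
    f (p t) = t ∨ f (p t) ∈ C := by
  obtain ⟨i, hi⟩ := hsel (p t)
  exact hi ▸ hp t i

variable [LinearOrder X] [Fintype ι] [TopologicalSpace X] [OrderTopology X] [ConnectedSpace X]

theorem monotone_of_continuous_selector (hf : Continuous f) (hsel : ∀ x, ∃ i, f x = x i) :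
    Monotone f := by
  classical
  intro x y hxy
  obtain ⟨L, hL⟩ := (finite_range x).bddBelow
  obtain ⟨M, hM⟩ := (finite_range y).bddAbove
  let p : X → ι → X := fun t j => y j ⊓ (x j ⊔ t)
  have hpL : p L = x := funext fun j => by
    simp [p, hL ⟨j, rfl⟩, hxy j]
  have hpM : p (L ⊔ M) = y := funext fun j => by
    simp [p, (hM ⟨j, rfl⟩ : y j ≤ M).trans (le_sup_right.trans le_sup_right)]
  have hp : ∀ t j, p t j = t ∨ p t j ∈ Finset.univ.image x ∪ Finset.univ.image y := by
    intro t j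
    rcases min_choice (y j) (x j ⊔ t) with h | h <;> rcases max_choice (x j) t with h' | h' <;>
      simp_all [p]
  have hpath : Monotone (f ∘ p) :=
    monotone_of_eq_self_or_mem (hf.comp (by fun_prop)) (eq_self_or_mem_of_selector hsel hp)
  simpa [hpL, hpM] using hpath (le_sup_left : L ≤ L ⊔ M)

theorem apply_inf_const_of_continuous_selector (hf : Continuous f)
    (hsel : ∀ x, ∃ i, f x = x i) (x : ι → X) (t : X) :
    f (fun j => x j ⊓ t) = f x ⊓ t := by
  classical
  obtain ⟨M, hM⟩ := (finite_range x).bddAbove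
  let g : X → X := fun t => f (fun j => x j ⊓ t)
  have hgC : ∀ t, g t = t ∨ g t ∈ Finset.univ.image x := by
    refine eq_self_or_mem_of_selector hsel fun t j => ?_
    rcases min_choice (x j) t with h | h <;> simp_all
  have hg : Continuous g := hf.comp (by fun_prop)
  have hg_le : ∀ t, g t ≤ t := fun t => by
    obtain ⟨i, hi⟩ := hsel (fun j => x j ⊓ t)
    exact hi.trans_le inf_le_right
  have hg_top : ∀ t, M ≤ t → g t = f x := fun t ht =>
    congrArg f <| funext fun j => inf_eq_left.2 ((hM ⟨j, rfl⟩).trans ht)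
  have hg_below : ∀ t ≤ f x, g t = t := by
    intro t ht
    by_contra hne
    obtain ⟨v, hv, hvC⟩ := exists_mem_Ioo_notMem_finset ((hg_le t).lt_of_ne hne) _
    obtain ⟨i, hi⟩ := hsel x
    have htM : t ≤ M := ht.trans (hi ▸ hM ⟨i, rfl⟩)
    have hv' : v ∈ uIcc (g t) (g M) :=
      mem_uIcc.2 (Or.inl ⟨hv.1.le, hv.2.le.trans (ht.trans_eq (hg_top M le_rfl).symm)⟩)
    exact (mem_Icc_and_eq_self_of_mem_uIcc hg hgC htM hv' hvC).1.1.not_gt hv.2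
  rcases le_total t (f x) with ht | ht
  · exact (hg_below t ht).trans (inf_eq_right.2 ht).symm
  · have hmono := monotone_of_eq_self_or_mem hg hgC
    refine le_antisymm ?_ ?_
    · calc g t ≤ g (t ⊔ M) := hmono le_sup_left
        _ = f x ⊓ t := by rw [hg_top _ le_sup_right, inf_eq_left.2 ht]
    · calc f x ⊓ t = g (f x) := by rw [inf_eq_left.2 ht, hg_below _ le_rfl]
        _ ≤ g t := hmono ht

theorem apply_sup_const_of_continuous_selector (hf : Continuous f)
    (hsel : ∀ x, ∃ i, f x = x i) (x : ι → X) (t : X) :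
    f (fun j => x j ⊔ t) = f x ⊔ t :=
  haveI : ConnectedSpace Xᵒᵈ := ‹ConnectedSpace X›
  apply_inf_const_of_continuous_selector (X := Xᵒᵈ) hf hsel x t

end ContinuousSelector

section HomogeneousSelector

variable {X ι : Type*} {f : (ι → X) → X}

def twoLevel [DecidableEq ι] (A : Finset ι) (s b : X) : ι → X := fun j => if j ∈ A then s else b

theorem apply_twoLevel_eq_or [DecidableEq ι] (hsel : ∀ x, ∃ i, f x = x i) (A : Finset ι)
    (s b : X) : f (twoLevel A s b) = s ∨ f (twoLevel A s b) = b := by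
  obtain ⟨i, hi⟩ := hsel (twoLevel A s b)
  unfold twoLevel at hi
  split_ifs at hi
  exacts [Or.inl hi, Or.inr hi]

variable [LinearOrder X]

theorem twoLevel_inf_const [DecidableEq ι] (A : Finset ι) (s b t : X) :
    (fun j => twoLevel A s b j ⊓ t) = twoLevel A (s ⊓ t) (b ⊓ t) :=
  funext fun j => by unfold twoLevel; split_ifs <;> rfl

theorem twoLevel_sup_const [DecidableEq ι] (A : Finset ι) (s b t : X) :
    (fun j => twoLevel A s b j ⊔ t) = twoLevel A (s ⊔ t) (b ⊔ t) :=
  funext fun j => by unfold twoLevel; split_ifs <;> rfl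

theorem apply_twoLevel_eq_top [DecidableEq ι] (hsel : ∀ x, ∃ i, f x = x i)
    (hinf : ∀ x t, f (fun j => x j ⊓ t) = f x ⊓ t) (hsup : ∀ x t, f (fun j => x j ⊔ t) = f x ⊔ t)
    (hmono : Monotone f) {A : Finset ι} {s b ℓ β : X} (hbs : b < s)
    (hs : f (twoLevel A s b) = s) (hβℓ : β < ℓ) : f (twoLevel A ℓ β) = ℓ := by
  -- Move the levels `(s, b) → (s, β') → (s ⊔ ℓ, β') → (ℓ, β') → (ℓ, β)` with `β' = β ⊓ b`:
  -- each move is a `⊔`/`⊓` with a constant or an increase, so the upper level stays selected.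
  set β' := β ⊓ b
  have hβ's : β' < s := inf_le_right.trans_lt hbs
  have h₁ : f (twoLevel A s β') = s := by
    have h := hsup (twoLevel A s β') b
    rw [twoLevel_sup_const, sup_eq_left.2 hbs.le, sup_eq_right.2 inf_le_right, hs] at h
    refine (apply_twoLevel_eq_or hsel A s β').resolve_right fun h' => ?_
    rw [h', sup_eq_right.2 inf_le_right] at h
    exact hbs.ne' h
  have h₂ : f (twoLevel A (s ⊔ ℓ) β') = s ⊔ ℓ := by
    refine (apply_twoLevel_eq_or hsel A _ β').resolve_right fun h' => ?_
    have hle : twoLevel A s β' ≤ twoLevel A (s ⊔ ℓ) β' := fun j => by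
      unfold twoLevel; split_ifs
      exacts [le_sup_left, le_rfl]
    exact (h₁ ▸ h' ▸ hmono hle).not_gt hβ's
  have h₃ : f (twoLevel A ℓ β') = ℓ := by
    have h := hinf (twoLevel A (s ⊔ ℓ) β') ℓ
    have hℓ : (s ⊔ ℓ) ⊓ ℓ = ℓ := inf_eq_right.2 le_sup_right
    rwa [twoLevel_inf_const, hℓ, inf_eq_left.2 (inf_le_left.trans hβℓ.le), h₂, hℓ] at h
  have h := hsup (twoLevel A ℓ β') β
  rwa [twoLevel_sup_const, sup_eq_left.2 hβℓ.le, sup_eq_right.2 inf_le_left, h₃,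
    sup_eq_left.2 hβℓ.le] at h

theorem exists_le_apply_and_apply_le [Fintype ι] (hsel : ∀ x, ∃ i, f x = x i)
    (hinf : ∀ x t, f (fun j => x j ⊓ t) = f x ⊓ t) (hsup : ∀ x t, f (fun j => x j ⊔ t) = f x ⊔ t)
    (hmono : Monotone f) (x y : ι → X) : ∃ j, f x ≤ x j ∧ y j ≤ f y := by
  classical
  by_cases hlow : ∀ j, f x ≤ x j
  · obtain ⟨j, hj⟩ := hsel y
    exact ⟨j, hlow j, hj.ge⟩
  simp only [not_forall, not_le] at hlow
  by_contra! hcon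
  set A := Finset.univ.filter (f x ≤ x ·)
  obtain ⟨k, hk, hk_max⟩ := Finset.exists_max_image (Finset.univ.filter (x · < f x)) x
    (by simpa [Finset.filter_nonempty_iff] using hlow)
  replace hk : x k < f x := (Finset.mem_filter.1 hk).2
  have htop : f (twoLevel A (f x) (x k)) = f x := by
    have hcut : twoLevel A (f x) (x k) = fun j => x j ⊓ f x ⊔ x k := funext fun j => by
      by_cases hj : f x ≤ x j
      · simp [twoLevel, A, hj, hk.le]
      · simp [twoLevel, A, hj, (not_le.1 hj).le, hk_max j (by simpa using hj)]
    rw [hcut, hsup (fun j => x j ⊓ f x), hinf, inf_idem, sup_eq_left.2 hk.le]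
  obtain ⟨i, hi⟩ := hsel x
  have hA : A.Nonempty := ⟨i, by simp [A, hi]⟩
  have hℓ : f y < A.inf' hA y :=
    (Finset.lt_inf'_iff hA).2 fun j hj => hcon j (by simpa [A] using hj)
  have hle : twoLevel A (A.inf' hA y) (f y) ≤ fun j => y j ⊔ f y := fun j => by
    unfold twoLevel; split_ifs with hj
    exacts [(Finset.inf'_le y hj).trans le_sup_left, le_sup_right]
  have h := hmono hle
  rw [apply_twoLevel_eq_top hsel hinf hsup hmono hk htop hℓ, hsup, sup_idem] at h
  exact h.not_gt hℓ

theorem eq_attach_sup'_inf'_iff (𝒦 : Finset (Finset ι)) (h𝒦 : 𝒦.attach.Nonempty)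
    (hK : ∀ K ∈ 𝒦, K.Nonempty) (x : ι → X) (a : X) :
    a = 𝒦.attach.sup' h𝒦 (fun K => K.1.inf' (hK K.1 K.2) x) ↔
      (∃ K ∈ 𝒦, ∀ j ∈ K, a ≤ x j) ∧ ∀ K ∈ 𝒦, ∃ j ∈ K, x j ≤ a := by
  simp only [le_antisymm_iff, Finset.le_sup'_iff, Finset.le_inf'_iff, Finset.sup'_le_iff,
    Finset.inf'_le_iff, Finset.mem_attach, true_and, Subtype.exists, Subtype.forall]
  tauto

end HomogeneousSelector

/-- For a connected linear order `X`, a function `f : X^d → X` is a continuous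
coordinate selector iff it is a lattice polynomial in the coordinates,
`f x = ⋁_{K ∈ 𝒦} ⋀_{j ∈ K} x j` for a nonempty family `𝒦` of nonempty subsets. -/
theorem continuous_selector_iff_lattice_poly (X : Type*) [LinearOrder X]
    [TopologicalSpace X] [OrderTopology X] [ConnectedSpace X]
    (d : ℕ) (f : (Fin d → X) → X) :
    (Continuous f ∧ ∀ x : Fin d → X, ∃ i : Fin d, f x = x i) ↔
    (∃ (𝒦 : Finset (Finset (Fin d))) (h𝒦 : 𝒦.Nonempty) (hK : ∀ K ∈ 𝒦, K.Nonempty),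
      ∀ x : Fin d → X, f x = 𝒦.attach.sup' (Finset.attach_nonempty_iff.mpr h𝒦)
        (fun K => K.1.inf' (hK K.1 K.2) (fun j => x j))) := by
  classical
  constructor
  · rintro ⟨hf, hsel⟩
    have hcross := exists_le_apply_and_apply_le hsel
      (apply_inf_const_of_continuous_selector hf hsel)
      (apply_sup_const_of_continuous_selector hf hsel) (monotone_of_continuous_selector hf hsel)
    let 𝒦 := Finset.univ.filter fun K : Finset (Fin d) => K.Nonempty ∧ ∀ y, ∃ j ∈ K, y j ≤ f y
    have hmem : ∀ x, Finset.univ.filter (f x ≤ x ·) ∈ 𝒦 := fun x => by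
      obtain ⟨i, hi⟩ := hsel x
      refine Finset.mem_filter.2 ⟨Finset.mem_univ _, ⟨i, by simp [hi]⟩, fun y => ?_⟩
      obtain ⟨j, hxj, hyj⟩ := hcross x y
      exact ⟨j, by simpa using hxj, hyj⟩
    obtain ⟨x₀⟩ : Nonempty (Fin d → X) := inferInstance
    have hK : ∀ K ∈ 𝒦, K.Nonempty := fun K hK => (Finset.mem_filter.1 hK).2.1
    refine ⟨𝒦, ⟨_, hmem x₀⟩, hK, fun x => (eq_attach_sup'_inf'_iff 𝒦 _ hK x (f x)).2 ⟨?_, ?_⟩⟩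
    · exact ⟨_, hmem x, fun j hj => (Finset.mem_filter.1 hj).2⟩
    · exact fun K hK𝒦 => (Finset.mem_filter.1 hK𝒦).2.2 x
  · rintro ⟨𝒦, h𝒦, hK, hrepr⟩
    refine ⟨?_, fun x => ?_⟩
    · rw [show f = _ from funext hrepr]
      exact Continuous.finset_sup'_apply _ fun K _ =>
        Continuous.finset_inf'_apply _ fun j _ => continuous_apply j
    · obtain ⟨⟨K, hK𝒦, hge⟩, hle⟩ := (eq_attach_sup'_inf'_iff _ _ _ _ _).1 (hrepr x)
      obtain ⟨j, hjK, hj⟩ := hle K hK𝒦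
      exact ⟨j, le_antisymm (hge j hjK) hj⟩
end

section
/- There exists a disconnected linear order X and a continuous coordinate selector f : X^2 → X that is not representable as a lattice polynomial in the coordinates. -/
/-! Take a clopen set `U` of `X` that is neither empty nor everything, and let `f` read the first
coordinate when it lies in `U` and the second one otherwise. Since `U` is clopen, `f` is
continuous. Every lattice polynomial is monotone, but `f` is not: if `w < u ≤ v` with `u ∈ U`,
`v ∉ U`, then `(u, w) ≤ (v, w)` while `f (u, w) = u > w = f (v, w)`. In `ℤ` take `U = (-∞, 0)`. -/

open Set

section LatticePolynomial

variable {ι α : Type*} [Lattice α]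

def latticePoly (𝒦 : Finset (Finset ι)) (h𝒦 : 𝒦.Nonempty) (hK : ∀ K ∈ 𝒦, K.Nonempty)
    (x : ι → α) : α :=
  𝒦.attach.sup' (Finset.attach_nonempty_iff.mpr h𝒦) fun K => K.1.inf' (hK K.1 K.2) fun j => x j

theorem latticePoly_monotone (𝒦 : Finset (Finset ι)) (h𝒦 : 𝒦.Nonempty)
    (hK : ∀ K ∈ 𝒦, K.Nonempty) : Monotone (latticePoly (α := α) 𝒦 h𝒦 hK) := fun _ _ hxy =>
  Finset.sup'_mono_fun fun _ _ =>
    Finset.le_inf' _ _ fun _ hj => (Finset.inf'_le _ hj).trans (hxy _)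

end LatticePolynomial

section Selector

variable {X : Type*} (U : Set X) [DecidablePred (· ∈ U)]

def selector (x : Fin 2 → X) : X :=
  if x 0 ∈ U then x 0 else x 1

theorem selector_eq_apply (x : Fin 2 → X) : ∃ i, selector U x = x i := by
  by_cases h : x 0 ∈ U
  · exact ⟨0, if_pos h⟩
  · exact ⟨1, if_neg h⟩

theorem continuous_selector [TopologicalSpace X] (hU : IsClopen U) : Continuous (selector U) := by
  have hfrontier : frontier {x : Fin 2 → X | x 0 ∈ U} = ∅ :=
    (hU.preimage (continuous_apply 0)).frontier_eq
  exact Continuous.if (by simp [hfrontier]) (continuous_apply 0) (continuous_apply 1)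

theorem not_monotone_selector [Preorder X] {u v w : X} (hu : u ∈ U) (hv : v ∉ U) (huv : u ≤ v)
    (hwu : w < u) : ¬ Monotone (selector U) := by
  intro hmono
  have hle : ![u, w] ≤ ![v, w] := by
    intro i
    fin_cases i
    exacts [huv, le_rfl]
  have : u ≤ w := by simpa [selector, hu, hv] using hmono hle
  exact hwu.not_ge this

end Selector

theorem not_connectedSpace_of_isClopen {X : Type*} [TopologicalSpace X] {U : Set X}
    (hU : IsClopen U) (hne : U.Nonempty) (hU_ne_univ : U ≠ univ) : ¬ ConnectedSpace X := fun _ =>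
  (isClopen_iff.mp hU).elim hne.ne_empty hU_ne_univ

/-- There is a disconnected linear order `X` and a continuous coordinate selector
`f : X² → X` that is not representable as a lattice polynomial in the coordinates. -/
theorem exists_disconnected_selector_not_poly :
    ∃ (X : Type) (_ : LinearOrder X) (_ : TopologicalSpace X) (_ : OrderTopology X)
      (f : (Fin 2 → X) → X),
      ¬ ConnectedSpace X ∧ Continuous f ∧ (∀ x : Fin 2 → X, ∃ i : Fin 2, f x = x i) ∧
      ¬ (∃ (𝒦 : Finset (Finset (Fin 2))) (h𝒦 : 𝒦.Nonempty) (hK : ∀ K ∈ 𝒦, K.Nonempty),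
        ∀ x : Fin 2 → X, f x = 𝒦.attach.sup' (Finset.attach_nonempty_iff.mpr h𝒦)
          (fun K => K.1.inf' (hK K.1 K.2) (fun j => x j))) := by
  have hU : IsClopen (Iio (0 : ℤ)) := isClopen_discrete _
  have hnotuniv : Iio (0 : ℤ) ≠ univ := ne_univ_iff_exists_notMem _ |>.mpr ⟨0, self_notMem_Iio⟩
  refine ⟨ℤ, inferInstance, inferInstance, inferInstance, selector (Iio 0),
    not_connectedSpace_of_isClopen hU ⟨-1, by simp⟩ hnotuniv, continuous_selector _ hU,
    selector_eq_apply _, ?_⟩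
  rintro ⟨𝒦, h𝒦, hK, hpoly⟩
  have hf : selector (Iio (0 : ℤ)) = latticePoly 𝒦 h𝒦 hK := funext hpoly
  exact not_monotone_selector (Iio 0) (u := -1) (v := 0) (w := -2) (by simp) (by simp)
    (by norm_num) (by norm_num) (hf ▸ latticePoly_monotone 𝒦 h𝒦 hK)
end
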